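/- Let A ∈ ℝ^{n×n}, ε > 0, and let U : ℝ → ℝ^{n×r} be differentiable and satisfy the Oja flow ε·(d/dt)U(t) = (I_n − U(t)U(t)ᵀ)·A·U(t) for all t. Then P(t) := U(t)·U(t)ᵀ is differentiable and satisfies the Riccati differential equation ε·(d/dt)P(t) = A·P(t) + P(t)·Aᵀ − P(t)·(A+Aᵀ)·P(t) for all t. -/

import Mathlib

/-!
By the product rule, `ε (UUᵀ)' = F Uᵀ + U Fᵀ` for the Oja vector field `F = (1 - P) A U`,
`P = UUᵀ`. Since `P` is symmetric this is `(1 - P) A P + P Aᵀ (1 - P)`, and expanding gives the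
Riccati right-hand side, an identity valid in any ring.
-/

open Matrix

theorem hasDerivAt_matrix_mul_apply {𝕜 𝔸 l m p : Type*} [NontriviallyNormedField 𝕜]
    [NormedRing 𝔸] [NormedAlgebra 𝕜 𝔸] [Fintype m]
    {U : 𝕜 → Matrix l m 𝔸} {V : 𝕜 → Matrix m p 𝔸} {U' : Matrix l m 𝔸} {V' : Matrix m p 𝔸}
    {x : 𝕜} (hU : ∀ i j, HasDerivAt (fun s => U s i j) (U' i j) x)
    (hV : ∀ j k, HasDerivAt (fun s => V s j k) (V' j k) x) (i : l) (k : p) :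
    HasDerivAt (fun s => (U s * V s) i k) ((U' * V x + U x * V') i k) x := by
  simp only [mul_apply, Matrix.add_apply, ← Finset.sum_add_distrib]
  exact HasDerivAt.fun_sum fun j _ => (hU i j).fun_mul (hV j k)

theorem one_sub_mul_mul_add_mul_mul_one_sub {R : Type*} [Ring R] (a b p : R) :
    (1 - p) * a * p + p * b * (1 - p) = a * p + p * b - p * (a + b) * p := by
  noncomm_ring

theorem oja_field_mul_transpose_add_mul_transpose {R n k : Type*} [CommRing R] [Fintype n]
    [DecidableEq n] [Fintype k] (A : Matrix n n R) (U : Matrix n k R) :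
    (1 - U * Uᵀ) * A * U * Uᵀ + U * ((1 - U * Uᵀ) * A * U)ᵀ =
      A * (U * Uᵀ) + (U * Uᵀ) * Aᵀ - (U * Uᵀ) * (A + Aᵀ) * (U * Uᵀ) := by
  rw [← one_sub_mul_mul_add_mul_mul_one_sub]
  simp only [transpose_mul, transpose_sub, transpose_transpose, transpose_one, Matrix.mul_assoc]

theorem oja_flow_projector_riccati
    (n r : ℕ)
    (A : Matrix (Fin n) (Fin n) ℝ)
    (ε : ℝ)
    (U U' : ℝ → Matrix (Fin n) (Fin r) ℝ)
    (hderiv : ∀ t, ∀ i j, HasDerivAt (fun s => U s i j) (U' t i j) t)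
    (hode : ∀ t, ε • U' t = (1 - U t * (U t)ᵀ) * A * U t) :
    ∃ P' : ℝ → Matrix (Fin n) (Fin n) ℝ,
      (∀ t, ∀ i j, HasDerivAt (fun s => (U s * (U s)ᵀ) i j) (P' t i j) t) ∧
      (∀ t, ε • P' t =
        A * (U t * (U t)ᵀ) + (U t * (U t)ᵀ) * Aᵀ -
          (U t * (U t)ᵀ) * (A + Aᵀ) * (U t * (U t)ᵀ)) := by
  refine ⟨fun t => U' t * (U t)ᵀ + U t * (U' t)ᵀ,
    fun t => hasDerivAt_matrix_mul_apply (hderiv t) fun j k => hderiv t k j, fun t => ?_⟩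
  calc ε • (U' t * (U t)ᵀ + U t * (U' t)ᵀ)
      = ε • U' t * (U t)ᵀ + U t * (ε • U' t)ᵀ := by
        rw [smul_add, Matrix.smul_mul, transpose_smul, Matrix.mul_smul]
    _ = _ := by rw [hode t, oja_field_mul_transpose_add_mul_transpose]
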